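/- arXiv:1211.4077 — 5 statements merged into one kernel-verified Lean document; each statement's English description precedes it below -/
import Mathlib

section
/- For every real a with 0 < |a| < 1 and every positive integer K, one has (1 - a²)/(1 - a^{2K}) ≤ (1 - a²) + a²/K. -/
theorem stmt_3 (a : ℝ) (ha : 0 < |a|) (ha1 : |a| < 1) (K : ℕ) (hK : 0 < K) :
    (1 - a^2) / (1 - a^(2*K)) ≤ (1 - a^2) + a^2 / K := by
  set b := a^2 with hbdef
  have hb0 : 0 < b := by
    have : a ≠ 0 := abs_pos.mp ha
    positivity
  have hb1 : b < 1 := by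
    have := sq_abs a
    nlinarith [abs_nonneg a]
  have hbK : a^(2*K) = b^K := by rw [hbdef, ← pow_mul]
  rw [hbK]
  set S := ∑ i ∈ Finset.range K, b^i with hSdef
  have h1 : S * (b - 1) = b^K - 1 := geom_sum_mul b K
  have h2 : (K:ℝ) * b^(K-1) ≤ S := by
    rw [hSdef]
    calc (K:ℝ) * b^(K-1) = ∑ _i ∈ Finset.range K, b^(K-1) := by
          simp [mul_comm]
      _ ≤ ∑ i ∈ Finset.range K, b^i := by
          apply Finset.sum_le_sum
          intro i hi
          exact pow_le_pow_of_le_one hb0.le hb1.le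
            (Nat.le_sub_one_of_lt (Finset.mem_range.mp hi))
  have h3 : b * b^(K-1) = b^K := by
    rw [← pow_succ']
    congr 1
    omega
  have hKpos : (0:ℝ) < K := Nat.cast_pos.mpr hK
  have hpos : 0 < 1 - b^K := by
    have : b^K < 1 := pow_lt_one₀ hb0.le hb1 hK.ne'
    linarith
  rw [div_le_iff₀ hpos]
  have hbS : (K:ℝ) * b^K ≤ b * S := by
    calc (K:ℝ) * b^K = b * ((K:ℝ) * b^(K-1)) := by rw [← h3]; ring
      _ ≤ b * S := by nlinarith
  have hdiv : b / K * (1 - b^K) ≥ (1 - b) * b^K := by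
    rw [ge_iff_le, div_mul_eq_mul_div, le_div_iff₀ hKpos]
    nlinarith
  nlinarith
end

section
/- For every real a with |a| > 1 and every positive integer K, one has (1 - a^{-2})/(1 - a^{-2K}) ≤ (1 - a^{-2}) + a^{-2}/K. -/
theorem stmt_4 (a : ℝ) (ha : 1 < |a|) (K : ℕ) (hK : 0 < K) :
    (1 - (a^2)⁻¹) / (1 - (a^(2*K))⁻¹) ≤ (1 - (a^2)⁻¹) + (a^2)⁻¹ / K := by
  set q : ℝ := (a^2)⁻¹ with hq
  have ha2 : (1:ℝ) < a^2 := by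
    have := sq_abs a
    nlinarith [abs_nonneg a]
  have hq0 : 0 < q := by positivity
  have hq1 : q < 1 := by
    rw [hq, inv_lt_one_iff₀]; right; exact ha2
  have hpow : (a^(2*K))⁻¹ = q^K := by
    rw [pow_mul, hq, inv_pow]
  rw [hpow]
  have hqK : q^K < 1 := pow_lt_one₀ hq0.le hq1 hK.ne'
  have hden : 0 < 1 - q^K := by linarith
  have hS : (K:ℝ) * q^(K-1) ≤ ∑ i ∈ Finset.range K, q^i := by
    calc (K:ℝ) * q^(K-1) = ∑ i ∈ Finset.range K, q^(K-1) := by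
          rw [Finset.sum_const, Finset.card_range, nsmul_eq_mul]
      _ ≤ ∑ i ∈ Finset.range K, q^i := by
          apply Finset.sum_le_sum
          intro i hi
          have := Finset.mem_range.mp hi
          exact pow_le_pow_of_le_one hq0.le hq1.le (by omega)
  have h1 : (1-q) * ∑ i ∈ Finset.range K, q^i = 1 - q^K := by
    have := geom_sum_mul q K
    nlinarith [this]
  have hkR : (1:ℝ) ≤ (K:ℝ) := by exact_mod_cast hK
  have hqq : q^(K-1) * q = q^K := by
    rw [← pow_succ]; congr 1; omega
  rw [div_le_iff₀ hden, ← sub_nonneg]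
  have key : (K:ℝ) * ((1 - q + q / K) * (1 - q^K) - (1-q)) =
      q * (1 - q^K) - (K:ℝ) * (1-q) * q^K := by
    field_simp
    ring
  have hpos : 0 ≤ q * (1 - q^K) - (K:ℝ) * (1-q) * q^K := by
    have h2 : (K:ℝ)*(1-q)*q^K ≤ q*(1-q^K) := by
      calc (K:ℝ)*(1-q)*q^K = (K:ℝ)*q^(K-1)*((1-q)*q) := by rw [← hqq]; ring
        _ ≤ (∑ i ∈ Finset.range K, q^i) * ((1-q)*q) :=
            mul_le_mul_of_nonneg_right hS (by nlinarith)
        _ = q*(1-q^K) := by linear_combination q * h1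
    linarith
  nlinarith [key, hpos, hkR]
end

section
/- Let a ∈ ℝ with 0 < |a| < 1 and K a positive integer. Then (Σ_{k=0}^{K-1} a^{2k})² / (Σ_{k=0}^{K-1} a^{4k}) ≥ K / ((1 - a²)K + a²). -/
lemma key_ineq (t : ℝ) (ht0 : 0 ≤ t) (ht1 : t ≤ 1) (K : ℕ) :
    (K : ℝ) * (∑ k ∈ Finset.range K, t ^ (2 * k)) ≤
      ((K : ℝ) - ((K : ℝ) - 1) * t) * (∑ k ∈ Finset.range K, t ^ k) ^ 2 := by
  induction K with
  | zero => simp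
  | succ K ih =>
    set A := ∑ k ∈ Finset.range K, t ^ k with hA
    set B := ∑ k ∈ Finset.range K, t ^ (2 * k) with hB
    have hA0 : 0 ≤ A := Finset.sum_nonneg fun k _ => pow_nonneg ht0 k
    have hB0 : 0 ≤ B := Finset.sum_nonneg fun k _ => pow_nonneg ht0 _
    have h1 : (1 - t) * A = 1 - t ^ K := by
      have := geom_sum_mul t K
      rw [hA]; nlinarith [this]
    have h1A : (1 - t) * A * A = (1 - t ^ K) * A := by rw [h1]
    have h2 : B + (K : ℝ) * t ^ (2 * K + 1) ≤ (1 + t ^ K) * A := by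
      have hleft : (1 + t ^ K) * A = ∑ k ∈ Finset.range K, (t ^ k + t ^ (K + k)) := by
        rw [Finset.sum_add_distrib, add_mul, one_mul, hA, Finset.mul_sum]
        congr 1
        exact Finset.sum_congr rfl fun k _ => (pow_add t K k).symm
      have hright : B + (K : ℝ) * t ^ (2 * K + 1)
          = ∑ k ∈ Finset.range K, (t ^ (2 * k) + t ^ (2 * K + 1)) := by
        rw [Finset.sum_add_distrib, Finset.sum_const, Finset.card_range, nsmul_eq_mul, hB]
      rw [hleft, hright]
      apply Finset.sum_le_sum
      intro k hk
      have hkK : k < K := Finset.mem_range.mp hk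
      have e1 : t ^ (2 * k) ≤ t ^ k := pow_le_pow_of_le_one ht0 ht1 (by omega)
      have e2 : t ^ (2 * K + 1) ≤ t ^ (K + k) := pow_le_pow_of_le_one ht0 ht1 (by omega)
      linarith
    rw [Finset.sum_range_succ, Finset.sum_range_succ, ← hA, ← hB]
    push_cast

    have hn1 : (0:ℝ) ≤ (K : ℝ) * (1 - t) * (A * t ^ K) :=
      mul_nonneg (mul_nonneg (Nat.cast_nonneg K) (by linarith))
        (mul_nonneg hA0 (pow_nonneg ht0 K))
    have hn2 : (0:ℝ) ≤ (K : ℝ) * (1 - t) * t ^ (2 * K) :=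
      mul_nonneg (mul_nonneg (Nat.cast_nonneg K) (by linarith)) (pow_nonneg ht0 _)
    have eQ : t ^ (2 * K) = t ^ K * t ^ K := by rw [two_mul, pow_add]
    have eR : t ^ (2 * K + 1) = t ^ K * t ^ K * t := by rw [pow_succ, eQ]
    rw [eR] at h2
    rw [eQ] at hn2 ⊢
    nlinarith [ih, h2, h1A, hn1, hn2]

theorem stmt_5 (a : ℝ) (ha : 0 < |a|) (ha1 : |a| < 1) (K : ℕ) (hK : 0 < K) :
    (∑ k ∈ Finset.range K, a^(2*k))^2 / (∑ k ∈ Finset.range K, a^(4*k)) ≥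
      K / ((1 - a^2) * K + a^2) := by
  have ha0 : a ≠ 0 := by
    intro h; rw [h] at ha; simp at ha
  have ht0 : 0 < a ^ 2 := by positivity
  have ht1 : a ^ 2 < 1 := by
    have h := sq_abs a
    nlinarith [abs_nonneg a]
  have hs1 : (∑ k ∈ Finset.range K, a^(2*k)) = ∑ k ∈ Finset.range K, (a^2) ^ k :=
    Finset.sum_congr rfl fun k _ => pow_mul a 2 k
  have hs2 : (∑ k ∈ Finset.range K, a^(4*k)) = ∑ k ∈ Finset.range K, (a^2) ^ (2*k) := by
    refine Finset.sum_congr rfl fun k _ => ?_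
    rw [← pow_mul]
    ring_nf
  have hS2pos : 0 < ∑ k ∈ Finset.range K, (a^2) ^ (2*k) :=
    Finset.sum_pos (fun k _ => pow_pos ht0 _) (Finset.nonempty_range_iff.mpr (by omega))
  have hDpos : 0 < (1 - a^2) * K + a^2 := by
    have : (0:ℝ) ≤ (1 - a^2) * K := mul_nonneg (by linarith) (Nat.cast_nonneg K)
    linarith
  rw [hs1, hs2, ge_iff_le, div_le_div_iff₀ hDpos hS2pos]
  have hkey := key_ineq (a^2) (le_of_lt ht0) (le_of_lt ht1) K
  nlinarith [hkey]
end

section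
/- Let a ∈ ℝ with |a| > 1 and K a positive integer. Then (Σ_{k=0}^{K-1} a^{2k})² / (Σ_{k=0}^{K-1} a^{4k}) ≥ K / ((1 - a^{-2})K + a^{-2}). -/
theorem stmt_6 (a : ℝ) (ha : 1 < |a|) (K : ℕ) (hK : 0 < K) :
    (∑ k ∈ Finset.range K, a^(2*k))^2 / (∑ k ∈ Finset.range K, a^(4*k)) ≥
      K / ((1 - (a^2)⁻¹) * K + (a^2)⁻¹) := by
  set b := a^2 with hbdef
  have hb : 1 < b := by nlinarith [sq_abs a, abs_nonneg a]
  have hb0 : 0 < b := by linarith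
  have h2 : ∀ k, a^(2*k) = b^k := fun k => pow_mul a 2 k
  have h4 : ∀ k, a^(4*k) = (b^k)^2 := by
    intro k
    rw [← pow_mul, hbdef, ← pow_mul]
    congr 1; ring
  simp only [h2, h4]
  set S := ∑ k ∈ Finset.range K, b^k with hS
  set D := ∑ k ∈ Finset.range K, (b^k)^2 with hD
  have hSK : (K:ℝ) ≤ S := by
    calc (K:ℝ) = ∑ _k ∈ Finset.range K, (1:ℝ) := by simp
    _ ≤ S := Finset.sum_le_sum fun k _ => one_le_pow₀ hb.le
  have hS0 : 0 < S := lt_of_lt_of_le (by exact_mod_cast hK) hSK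
  have hD0 : 0 < D := Finset.sum_pos (fun k _ => by positivity) ⟨0, by simp [hK]⟩
  have hgeom : S * (b - 1) = b^K - 1 := geom_sum_mul b K
  have hDle : D ≤ b^(K-1) * S := by
    rw [hD, hS, Finset.mul_sum]
    apply Finset.sum_le_sum
    intro k hk
    have hk' : k ≤ K - 1 := by
      have := Finset.mem_range.mp hk; omega
    have hle : b^k ≤ b^(K-1) := pow_le_pow_right₀ hb.le hk'
    nlinarith [pow_pos hb0 k]
  have hbK : b * b^(K-1) = b^K := by
    rw [← pow_succ']; congr 1; omega
  have hKey : (K:ℝ) * (b * b^(K-1)) ≤ S * (b*K - ((K:ℝ)-1)) := by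
    rw [hbK]
    nlinarith [hgeom, hSK, Nat.cast_nonneg (α := ℝ) K]
  have hden : 0 < (1 - b⁻¹) * K + b⁻¹ := by
    have h1 : 0 < b⁻¹ := inv_pos.mpr hb0
    have h2 : b⁻¹ < 1 := by
      rw [inv_lt_one_iff₀]; right; exact hb
    have hK1 : (1:ℝ) ≤ K := by exact_mod_cast hK
    nlinarith
  rw [ge_iff_le, div_le_div_iff₀ hden hD0]
  have hform : S^2 * ((1 - b⁻¹)*K + b⁻¹) = S^2 * (b*K - ((K:ℝ)-1)) / b := by
    field_simp; ring
  rw [hform, le_div_iff₀ hb0]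
  nlinarith [mul_le_mul_of_nonneg_left hDle (by positivity : (0:ℝ) ≤ (K:ℝ)*b),
    mul_le_mul_of_nonneg_left hKey hS0.le]
end

section
/- Suppose A = U₁Λ₁U₁ᵀ + U₂Λ₂U₂ᵀ as above and U₁ᵀ satisfies the scaled RIP of order S: (1−δ_S)(L/N)‖x₀‖₂² ≤ ‖U₁ᵀx₀‖₂² ≤ (1+δ_S)(L/N)‖x₀‖₂² for all S-sparse x₀ ∈ ℝ^N, with δ_S ∈ (0,1). Then for observation times k₀,...,k_{K−1} and the stacked matrix A_Ω = [A^{k₀}; A^{k₁}; …; A^{k_{K−1}}], every S-sparse x₀ ∈ ℝ^N satisfies (1−δ_S)(L/N) Σᵢ λ_{1,min}^{2kᵢ} ≤ ‖A_Ω x₀‖₂²/‖x₀‖₂² ≤ (1+δ_S)(L/N) Σᵢ λ_{1,max}^{2kᵢ} + Σᵢ λ_{2,max}^{2kᵢ} (for x₀ ≠ 0). -/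
open Matrix

theorem stmt_10 (N L S K : ℕ)
    (U1 : Matrix (Fin N) (Fin L) ℝ) (U2 : Matrix (Fin N) (Fin (N - L)) ℝ)
    (d1 : Fin L → ℝ) (d2 : Fin (N - L) → ℝ)
    (hd1 : ∀ i, 0 ≤ d1 i) (hd2 : ∀ j, 0 ≤ d2 j)
    (hU1 : U1ᵀ * U1 = 1) (hU2 : U2ᵀ * U2 = 1)
    (hUU : U1 * U1ᵀ + U2 * U2ᵀ = 1) (hU12 : U1ᵀ * U2 = 0)
    (A : Matrix (Fin N) (Fin N) ℝ)
    (hA : A = U1 * Matrix.diagonal d1 * U1ᵀ + U2 * Matrix.diagonal d2 * U2ᵀ)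
    (l1min l1max l2max : ℝ)
    (hmin : ∀ i, l1min ≤ d1 i) (hmin0 : 0 ≤ l1min)
    (hmax : ∀ i, d1 i ≤ l1max) (h2max : ∀ j, d2 j ≤ l2max)
    (δS : ℝ) (hδS : δS ∈ Set.Ioo (0:ℝ) 1)
    (hRIP : ∀ x0 : Fin N → ℝ,
      (Finset.univ.filter (fun i => x0 i ≠ 0)).card ≤ S →
      (1 - δS) * (L / N) * (∑ j, (x0 j)^2) ≤ ∑ i, (U1ᵀ.mulVec x0 i)^2 ∧
      ∑ i, (U1ᵀ.mulVec x0 i)^2 ≤ (1 + δS) * (L / N) * (∑ j, (x0 j)^2))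
    (k : Fin K → ℕ) (x0 : Fin N → ℝ) (hx0 : x0 ≠ 0)
    (hsparse : (Finset.univ.filter (fun i => x0 i ≠ 0)).card ≤ S) :
    (1 - δS) * (L / N) * (∑ i, l1min^(2 * k i)) ≤
      (∑ i, ∑ j, ((A^(k i)).mulVec x0 j)^2) / (∑ j, (x0 j)^2) ∧
    (∑ i, ∑ j, ((A^(k i)).mulVec x0 j)^2) / (∑ j, (x0 j)^2) ≤
      (1 + δS) * (L / N) * (∑ i, l1max^(2 * k i)) + ∑ i, l2max^(2 * k i) := by
  obtain ⟨hδ0, hδ1⟩ := hδS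
  have hU21 : U2ᵀ * U1 = 0 := by
    have := congrArg Matrix.transpose hU12
    simpa [Matrix.transpose_mul] using this
  -- powers of A
  have hpow : ∀ m : ℕ, A ^ m =
      U1 * (Matrix.diagonal d1) ^ m * U1ᵀ + U2 * (Matrix.diagonal d2) ^ m * U2ᵀ := by
    intro m
    induction m with
    | zero => simpa using hUU.symm
    | succ n ih =>
      have h1 : ∀ (B : Matrix (Fin L) (Fin L) ℝ), U1 * B * U1ᵀ * U1 = U1 * B := by
        intro B; rw [Matrix.mul_assoc (U1 * B), hU1, Matrix.mul_one]
      have h2 : ∀ (B : Matrix (Fin (N - L)) (Fin (N - L)) ℝ),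
          U2 * B * U2ᵀ * U2 = U2 * B := by
        intro B; rw [Matrix.mul_assoc (U2 * B), hU2, Matrix.mul_one]
      have h3 : ∀ (B : Matrix (Fin L) (Fin L) ℝ),
          U1 * B * U1ᵀ * U2 = 0 := by
        intro B; rw [Matrix.mul_assoc (U1 * B), hU12, Matrix.mul_zero]
      have h4 : ∀ (B : Matrix (Fin (N - L)) (Fin (N - L)) ℝ),
          U2 * B * U2ᵀ * U1 = 0 := by
        intro B; rw [Matrix.mul_assoc (U2 * B), hU21, Matrix.mul_zero]
      have e1 : U1 * Matrix.diagonal d1 ^ n * U1ᵀ * (U1 * Matrix.diagonal d1 * U1ᵀ)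
          = U1 * Matrix.diagonal d1 ^ (n + 1) * U1ᵀ := by
        rw [← Matrix.mul_assoc, ← Matrix.mul_assoc, h1, Matrix.mul_assoc U1, ← pow_succ]
      have e2 : U1 * Matrix.diagonal d1 ^ n * U1ᵀ * (U2 * Matrix.diagonal d2 * U2ᵀ)
          = 0 := by
        rw [← Matrix.mul_assoc, ← Matrix.mul_assoc, h3, Matrix.zero_mul, Matrix.zero_mul]
      have e3 : U2 * Matrix.diagonal d2 ^ n * U2ᵀ * (U1 * Matrix.diagonal d1 * U1ᵀ)
          = 0 := by
        rw [← Matrix.mul_assoc, ← Matrix.mul_assoc, h4, Matrix.zero_mul, Matrix.zero_mul]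
      have e4 : U2 * Matrix.diagonal d2 ^ n * U2ᵀ * (U2 * Matrix.diagonal d2 * U2ᵀ)
          = U2 * Matrix.diagonal d2 ^ (n + 1) * U2ᵀ := by
        rw [← Matrix.mul_assoc, ← Matrix.mul_assoc, h2, Matrix.mul_assoc U2, ← pow_succ]
      rw [pow_succ, ih, hA]
      rw [Matrix.add_mul, Matrix.mul_add, Matrix.mul_add]
      rw [e1, e2, e3, e4, add_zero, zero_add]
  set y1 : Fin L → ℝ := U1ᵀ.mulVec x0 with hy1
  set y2 : Fin (N - L) → ℝ := U2ᵀ.mulVec x0 with hy2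
  have hdot11 : ∀ (a b : Fin L → ℝ), (U1 *ᵥ a) ⬝ᵥ (U1 *ᵥ b) = a ⬝ᵥ b := by
    intro a b
    rw [Matrix.dotProduct_mulVec, ← Matrix.mulVec_transpose, Matrix.mulVec_mulVec, hU1,
      Matrix.one_mulVec]
  have hdot22 : ∀ (a b : Fin (N - L) → ℝ), (U2 *ᵥ a) ⬝ᵥ (U2 *ᵥ b) = a ⬝ᵥ b := by
    intro a b
    rw [Matrix.dotProduct_mulVec, ← Matrix.mulVec_transpose, Matrix.mulVec_mulVec, hU2,
      Matrix.one_mulVec]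
  have hdot12 : ∀ (a : Fin L → ℝ) (b : Fin (N - L) → ℝ),
      (U1 *ᵥ a) ⬝ᵥ (U2 *ᵥ b) = 0 := by
    intro a b
    rw [Matrix.dotProduct_mulVec, ← Matrix.mulVec_transpose, Matrix.mulVec_mulVec, hU21,
      Matrix.zero_mulVec, zero_dotProduct]
  have hdot21 : ∀ (a : Fin (N - L) → ℝ) (b : Fin L → ℝ),
      (U2 *ᵥ a) ⬝ᵥ (U1 *ᵥ b) = 0 := by
    intro a b
    rw [Matrix.dotProduct_mulVec, ← Matrix.mulVec_transpose, Matrix.mulVec_mulVec, hU12,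
      Matrix.zero_mulVec, zero_dotProduct]
  have hsplit : ∀ (a : Fin L → ℝ) (b : Fin (N - L) → ℝ),
      ∑ j, ((U1 *ᵥ a + U2 *ᵥ b) j) ^ 2 = (∑ i, (a i) ^ 2) + ∑ i, (b i) ^ 2 := by
    intro a b
    have : ∑ j, ((U1 *ᵥ a + U2 *ᵥ b) j) ^ 2
        = (U1 *ᵥ a + U2 *ᵥ b) ⬝ᵥ (U1 *ᵥ a + U2 *ᵥ b) := by
      simp [dotProduct, sq]
    rw [this, add_dotProduct, dotProduct_add, dotProduct_add,
      hdot11, hdot22, hdot12, hdot21, add_zero, zero_add]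
    simp [dotProduct, sq]
  -- decomposition of x0
  have hx0dec : x0 = U1 *ᵥ y1 + U2 *ᵥ y2 := by
    rw [hy1, hy2, Matrix.mulVec_mulVec, Matrix.mulVec_mulVec, ← Matrix.add_mulVec, hUU,
      Matrix.one_mulVec]
  set s : ℝ := ∑ j, (x0 j) ^ 2 with hs
  set s1 : ℝ := ∑ i, (y1 i) ^ 2 with hs1
  set s2 : ℝ := ∑ i, (y2 i) ^ 2 with hs2
  have hsum : s = s1 + s2 := by
    rw [hs, hs1, hs2]
    conv_lhs => rw [hx0dec]
    exact hsplit y1 y2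
  have hs1nn : 0 ≤ s1 := Finset.sum_nonneg fun i _ => sq_nonneg _
  have hs2nn : 0 ≤ s2 := Finset.sum_nonneg fun i _ => sq_nonneg _
  have hspos : 0 < s := by
    obtain ⟨j, hj⟩ := Function.ne_iff.mp hx0
    exact Finset.sum_pos' (fun i _ => sq_nonneg _)
      ⟨j, Finset.mem_univ j, pow_two_pos_of_ne_zero (by simpa using hj)⟩
  obtain ⟨hRl, hRu⟩ := hRIP x0 hsparse
  rw [← hy1, ← hs, ← hs1] at hRl hRu
  -- per-term computation
  have hT : ∀ m : ℕ, ∑ j, ((A ^ m).mulVec x0 j) ^ 2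
      = (∑ i, (d1 i) ^ (2 * m) * (y1 i) ^ 2) + ∑ i, (d2 i) ^ (2 * m) * (y2 i) ^ 2 := by
    intro m
    have hv : (A ^ m).mulVec x0
        = U1 *ᵥ ((Matrix.diagonal d1) ^ m *ᵥ y1) + U2 *ᵥ ((Matrix.diagonal d2) ^ m *ᵥ y2) := by
      rw [hpow m, Matrix.add_mulVec, hy1, hy2]
      simp only [Matrix.mulVec_mulVec, Matrix.mul_assoc]
    rw [hv, hsplit]
    congr 1
    · apply Finset.sum_congr rfl
      intro i _
      rw [Matrix.diagonal_pow, Matrix.mulVec_diagonal, mul_pow, Pi.pow_apply, ← pow_mul,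
        mul_comm m 2]
    · apply Finset.sum_congr rfl
      intro i _
      rw [Matrix.diagonal_pow, Matrix.mulVec_diagonal, mul_pow, Pi.pow_apply, ← pow_mul,
        mul_comm m 2]
  have hTl : ∀ m : ℕ, l1min ^ (2 * m) * s1 ≤ ∑ j, ((A ^ m).mulVec x0 j) ^ 2 := by
    intro m
    rw [hT m]
    have h1 : l1min ^ (2 * m) * s1 ≤ ∑ i, (d1 i) ^ (2 * m) * (y1 i) ^ 2 := by
      rw [hs1, Finset.mul_sum]
      apply Finset.sum_le_sum
      intro i _
      exact mul_le_mul_of_nonneg_right (pow_le_pow_left₀ hmin0 (hmin i) _) (sq_nonneg _)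
    have h2 : (0:ℝ) ≤ ∑ i, (d2 i) ^ (2 * m) * (y2 i) ^ 2 :=
      Finset.sum_nonneg fun i _ => mul_nonneg (pow_nonneg (hd2 i) _) (sq_nonneg _)
    linarith
  have hTu : ∀ m : ℕ, ∑ j, ((A ^ m).mulVec x0 j) ^ 2
      ≤ l1max ^ (2 * m) * s1 + l2max ^ (2 * m) * s2 := by
    intro m
    rw [hT m]
    have h1 : ∑ i, (d1 i) ^ (2 * m) * (y1 i) ^ 2 ≤ l1max ^ (2 * m) * s1 := by
      rw [hs1, Finset.mul_sum]
      apply Finset.sum_le_sum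
      intro i _
      exact mul_le_mul_of_nonneg_right (pow_le_pow_left₀ (hd1 i) (hmax i) _) (sq_nonneg _)
    have h2 : ∑ i, (d2 i) ^ (2 * m) * (y2 i) ^ 2 ≤ l2max ^ (2 * m) * s2 := by
      rw [hs2, Finset.mul_sum]
      apply Finset.sum_le_sum
      intro i _
      exact mul_le_mul_of_nonneg_right (pow_le_pow_left₀ (hd2 i) (h2max i) _) (sq_nonneg _)
    linarith
  have hl2nn : ∀ m : ℕ, (0:ℝ) ≤ l2max ^ (2 * m) := fun m =>
    Even.pow_nonneg (even_two_mul m) _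
  have hl1nn : ∀ m : ℕ, (0:ℝ) ≤ l1max ^ (2 * m) := fun m =>
    Even.pow_nonneg (even_two_mul m) _
  have hlminnn : ∀ m : ℕ, (0:ℝ) ≤ l1min ^ (2 * m) := fun m => pow_nonneg hmin0 _
  constructor
  · rw [le_div_iff₀ hspos]
    calc (1 - δS) * (↑L / ↑N) * (∑ i, l1min ^ (2 * k i)) * s
        = ∑ i, l1min ^ (2 * k i) * ((1 - δS) * (↑L / ↑N) * s) := by
          simp only [Finset.mul_sum, Finset.sum_mul]
          apply Finset.sum_congr rfl; intros; ring
      _ ≤ ∑ i, l1min ^ (2 * k i) * s1 := by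
          apply Finset.sum_le_sum
          intro i _
          exact mul_le_mul_of_nonneg_left hRl (hlminnn (k i))
      _ ≤ ∑ i, ∑ j, ((A ^ (k i)).mulVec x0 j) ^ 2 :=
          Finset.sum_le_sum fun i _ => hTl (k i)
  · rw [div_le_iff₀ hspos]
    calc ∑ i, ∑ j, ((A ^ (k i)).mulVec x0 j) ^ 2
        ≤ ∑ i, (l1max ^ (2 * k i) * s1 + l2max ^ (2 * k i) * s2) :=
          Finset.sum_le_sum fun i _ => hTu (k i)
      _ ≤ ∑ i, (l1max ^ (2 * k i) * ((1 + δS) * (↑L / ↑N) * s) + l2max ^ (2 * k i) * s) := by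
          apply Finset.sum_le_sum
          intro i _
          have h1 := mul_le_mul_of_nonneg_left hRu (hl1nn (k i))
          have h2 : l2max ^ (2 * k i) * s2 ≤ l2max ^ (2 * k i) * s := by
            apply mul_le_mul_of_nonneg_left _ (hl2nn (k i))
            linarith [hsum, hs1nn]
          linarith
      _ = ((1 + δS) * (↑L / ↑N) * (∑ i, l1max ^ (2 * k i)) + ∑ i, l2max ^ (2 * k i)) * s := by
          rw [Finset.sum_add_distrib]
          simp only [add_mul, Finset.mul_sum, Finset.sum_mul]
          congr 1 <;> (apply Finset.sum_congr rfl; intros; ring)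
end
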